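/- arXiv:1710.10362 — 2 statements merged into one kernel-verified Lean document; each statement's English description precedes it below -/
import Mathlib

section
/- For real numbers b ≥ a > 0, the sum over all integers n of log(((n + 1/2)² + b²)/((n + 1/2)² + a²)) equals 2π(b − a) − 2·log((1 + e^{−2πa})/(1 + e^{−2πb})). -/
/-!
Taking `z = i x` in Euler's sine product gives `sinh (π x) = π x ∏ (1 + x² / (j + 1)²)`.
Splitting the product for `sinh (2π x)` into odd and even factors and dividing by the one for
`2 sinh (π x)` leaves `cosh (π x) = ∏ (1 + x² / (k + 1/2)²)`. Taking logarithms, the sum over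
`n ≥ 0` is `log cosh (π b) - log cosh (π a)`; the terms at `n` and `-1 - n` agree, so the sum
over `ℤ` is twice that, and `log cosh y = y + log (1 + e^{-2y}) - log 2`.
-/

open Real Filter Topology Finset

theorem Finset.prod_range_two_mul {M : Type*} [CommMonoid M] (f : ℕ → M) (n : ℕ) :
    ∏ j ∈ range (2 * n), f j =
      (∏ k ∈ range n, f (2 * k)) * ∏ k ∈ range n, f (2 * k + 1) := by
  induction n with
  | zero => simp
  | succ n ih =>
    rw [Nat.mul_succ, prod_range_succ, prod_range_succ, ih, prod_range_succ, prod_range_succ]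
    ac_rfl

theorem Real.tendsto_euler_sinh_prod (x : ℝ) :
    Tendsto (fun n : ℕ => π * x * ∏ j ∈ range n, (1 + x ^ 2 / ((j : ℝ) + 1) ^ 2))
      atTop (𝓝 (sinh (π * x))) := by
  convert (Complex.continuous_im.tendsto _).comp
    (Complex.tendsto_euler_sin_prod (x * Complex.I)) using 1
  · ext n
    have hprod : (π : ℂ) * (x * Complex.I) *
        ∏ j ∈ range n, (1 - (x * Complex.I) ^ 2 / ((j : ℂ) + 1) ^ 2) =
        ↑(π * x * ∏ j ∈ range n, (1 + x ^ 2 / ((j : ℝ) + 1) ^ 2)) * Complex.I := by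
      push_cast
      simp only [mul_pow, Complex.I_sq, mul_neg_one, neg_div, sub_neg_eq_add]
      ring
    rw [Function.comp_apply, hprod, Complex.mul_I_im, Complex.ofReal_re]
  · rw [← mul_assoc, ← Complex.ofReal_mul, Complex.sin_mul_I, ← Complex.ofReal_sinh,
      Complex.mul_I_im, Complex.ofReal_re]

theorem Real.tendsto_euler_cosh_prod (x : ℝ) :
    Tendsto (fun n : ℕ => ∏ j ∈ range n, (1 + x ^ 2 / ((j : ℝ) + 1 / 2) ^ 2))
      atTop (𝓝 (cosh (π * x))) := by
  rcases eq_or_ne x 0 with rfl | hx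
  · simp
  have hsinh : sinh (π * x) ≠ 0 := by simp [hx, pi_ne_zero]
  have hquot := ((tendsto_euler_sinh_prod (2 * x)).comp
    (tendsto_id.const_mul_atTop' two_pos)).div ((tendsto_euler_sinh_prod x).const_mul 2)
    (mul_ne_zero two_ne_zero hsinh)
  rw [mul_left_comm, sinh_two_mul, mul_assoc, mul_div_mul_left _ _ two_ne_zero,
    mul_div_cancel_left₀ _ hsinh] at hquot
  refine hquot.congr fun n => ?_
  have hhalf (k : ℕ) :
      1 + (2 * x) ^ 2 / ((2 * k : ℕ) + 1 : ℝ) ^ 2 = 1 + x ^ 2 / ((k : ℝ) + 1 / 2) ^ 2 := by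
    push_cast
    field_simp
  have hwhole (k : ℕ) :
      1 + (2 * x) ^ 2 / ((2 * k + 1 : ℕ) + 1 : ℝ) ^ 2 = 1 + x ^ 2 / ((k : ℝ) + 1) ^ 2 := by
    push_cast
    field_simp
    ring
  have hsinh_prod : ∏ k ∈ range n, (1 + x ^ 2 / ((k : ℝ) + 1) ^ 2) ≠ 0 :=
    (prod_pos fun k _ => by positivity).ne'
  simp only [Function.comp_apply, id, Pi.div_apply, prod_range_two_mul, hhalf, hwhole]
  field_simp

theorem Real.hasSum_log_one_add_sq_div_sq_add_half (x : ℝ) :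
    HasSum (fun n : ℕ => log (1 + x ^ 2 / ((n : ℝ) + 1 / 2) ^ 2)) (log (cosh (π * x))) := by
  refine (hasSum_iff_tendsto_nat_of_nonneg
    (fun n => log_nonneg (le_add_of_nonneg_right (by positivity))) _).2 ?_
  refine ((continuousAt_log (cosh_pos _).ne').tendsto.comp (tendsto_euler_cosh_prod x)).congr
    fun n => ?_
  rw [Function.comp_apply, log_prod fun j _ => by positivity]

theorem HasSum.int_of_nat_add_half {α : Type*} [AddCommMonoid α] [TopologicalSpace α]
    [ContinuousAdd α] {F : ℝ → α} (hF : ∀ y, F (-y) = F y) {s : α}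
    (h : HasSum (fun n : ℕ => F (n + 1 / 2)) s) :
    HasSum (fun n : ℤ => F (n + 1 / 2)) (s + s) := by
  refine (h.int_rec h).congr_fun fun n => ?_
  cases n with
  | ofNat m => simp
  | negSucc m =>
    show F ((Int.negSucc m : ℝ) + 1 / 2) = F (m + 1 / 2)
    rw [Int.cast_negSucc, ← hF]
    push_cast
    ring_nf

theorem Real.log_cosh (x : ℝ) : log (cosh x) = x + log (1 + exp (-2 * x)) - log 2 := by
  have : cosh x = exp x * (1 + exp (-2 * x)) / 2 := by
    rw [cosh_eq, mul_add, mul_one, ← exp_add]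
    ring_nf
  rw [this, log_div (by positivity) two_ne_zero, log_mul (exp_pos _).ne' (by positivity), log_exp]

theorem sum_log_ratio_half_int_general (a b : ℝ) :
    ∑' n : ℤ, Real.log ((((n : ℝ) + 1 / 2) ^ 2 + b ^ 2) / (((n : ℝ) + 1 / 2) ^ 2 + a ^ 2)) =
      2 * π * (b - a) -
        2 * Real.log ((1 + Real.exp (-2 * π * a)) / (1 + Real.exp (-2 * π * b))) := by
  have hterm (y : ℝ) (hy : y ≠ 0) : log ((y ^ 2 + b ^ 2) / (y ^ 2 + a ^ 2)) =
      log (1 + b ^ 2 / y ^ 2) - log (1 + a ^ 2 / y ^ 2) := by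
    rw [← log_div (by positivity) (by positivity)]
    congr 1
    field_simp
  have hnat : HasSum
      (fun n : ℕ => log ((((n : ℝ) + 1 / 2) ^ 2 + b ^ 2) / (((n : ℝ) + 1 / 2) ^ 2 + a ^ 2)))
      (log (cosh (π * b)) - log (cosh (π * a))) :=
    ((hasSum_log_one_add_sq_div_sq_add_half b).sub
      (hasSum_log_one_add_sq_div_sq_add_half a)).congr_fun fun n => hterm _ (by positivity)
  rw [(hnat.int_of_nat_add_half (F := fun y => log ((y ^ 2 + b ^ 2) / (y ^ 2 + a ^ 2)))
    fun y => by simp only [neg_sq]).tsum_eq, log_cosh, log_cosh,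
    log_div (by positivity) (by positivity)]
  ring_nf

theorem sum_log_ratio_half_int (a b : ℝ) (ha : 0 < a) (hab : a ≤ b) :
    ∑' n : ℤ, Real.log ((((n : ℝ) + 1 / 2) ^ 2 + b ^ 2) / (((n : ℝ) + 1 / 2) ^ 2 + a ^ 2)) =
      2 * π * (b - a) -
        2 * Real.log ((1 + Real.exp (-2 * π * a)) / (1 + Real.exp (-2 * π * b))) :=
  sum_log_ratio_half_int_general a b
end

section
/- Let β > 0 and Δ > 0. The integral over ℝ of the difference between the majorant m⁺(x) = (β/(β² + x²))·(e^{2πβΔ} + e^{−2πβΔ} − 2cos(2πΔx))/(e^{πβΔ} − e^{−πβΔ})² and the Poisson kernel h_β(x) = β/(β² + x²) equals 2π e^{−2πβΔ}/(1 − e^{−2πβΔ}). -/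
open Real MeasureTheory Set

open scoped FourierTransform

/-!
Write `h x = β / (β ^ 2 + x ^ 2)`, `E = exp (-2πβΔ)` and `D = (exp (πβΔ) - exp (-πβΔ)) ^ 2`.
Since `D = exp (2πβΔ) + E - 2`, the integrand is `(2 / D) · h x · (1 - cos (2πΔx))`.
Up to the factor `π`, `h` is the Fourier transform of `exp (-2πβ|x|)`, so Fourier inversion
gives `∫ h x cos (2πΔx) dx = π E`, while `∫ h = π`. The integral is therefore
`2π (1 - E) / D`, which is `2π E / (1 - E)` because `D = (1 - E) ^ 2 / E`.
-/

theorem integrable_exp_neg_mul_abs {a : ℝ} (ha : 0 < a) :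
    Integrable fun x : ℝ ↦ rexp (-(a * |x|)) := by
  rw [← integrableOn_univ, ← Iic_union_Ioi (a := 0), integrableOn_union]
  constructor
  · refine (integrableOn_exp_mul_Iic ha 0).congr_fun (fun x hx ↦ ?_) measurableSet_Iic
    rw [abs_of_nonpos hx, mul_neg, neg_neg]
  · refine (integrableOn_exp_mul_Ioi (neg_neg_of_pos ha) 0).congr_fun (fun x hx ↦ ?_)
      measurableSet_Ioi
    simp only [abs_of_pos (mem_Ioi.1 hx), neg_mul]

theorem fourier_exp_neg_mul_abs {a : ℝ} (ha : 0 < a) (ξ : ℝ) :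
    𝓕 (fun x : ℝ ↦ (rexp (-(a * |x|)) : ℂ)) ξ = (2 * a / (a ^ 2 + (2 * π * ξ) ^ 2) : ℝ) := by
  set c : ℂ := 2 * π * ξ * Complex.I
  have hIic : EqOn
      (fun v : ℝ ↦ Complex.exp (↑(-2 * π * v * ξ) * Complex.I) • (rexp (-(a * |v|)) : ℂ))
      (fun v ↦ Complex.exp ((a - c) * v)) (Iic 0) := by
    intro v hv
    simp only [abs_of_nonpos (mem_Iic.1 hv), smul_eq_mul, Complex.ofReal_exp,
      ← Complex.exp_add, c]
    congr 1
    push_cast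
    ring
  have hIoi : EqOn
      (fun v : ℝ ↦ Complex.exp (↑(-2 * π * v * ξ) * Complex.I) • (rexp (-(a * |v|)) : ℂ))
      (fun v ↦ Complex.exp ((-a - c) * v)) (Ioi 0) := by
    intro v hv
    simp only [abs_of_pos (mem_Ioi.1 hv), smul_eq_mul, Complex.ofReal_exp,
      ← Complex.exp_add, c]
    congr 1
    push_cast
    ring
  have hre₁ : 0 < ((a : ℂ) - c).re := by simpa [c] using ha
  have hre₂ : (-(a : ℂ) - c).re < 0 := by simpa [c] using ha
  rw [Real.fourier_real_eq_integral_exp_smul, ← intervalIntegral.integral_Iic_add_Ioi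
      ((integrableOn_exp_mul_complex_Iic hre₁ 0).congr_fun hIic.symm measurableSet_Iic)
      ((integrableOn_exp_mul_complex_Ioi hre₂ 0).congr_fun hIoi.symm measurableSet_Ioi),
    setIntegral_congr_fun measurableSet_Iic hIic, setIntegral_congr_fun measurableSet_Ioi hIoi,
    integral_exp_mul_complex_Iic hre₁, integral_exp_mul_complex_Ioi hre₂]
  have h₁ : (a : ℂ) - c ≠ 0 := fun h ↦ by simp [h] at hre₁
  have h₂ : (a : ℂ) + c ≠ 0 := fun h ↦ ha.ne' (by simpa [c] using congrArg Complex.re h)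
  have hprod : ((a : ℂ) - c) * (a + c) = (a ^ 2 + (2 * π * ξ) ^ 2 : ℝ) := by
    simp only [c]
    push_cast
    ring_nf
    rw [Complex.I_sq]
    ring
  rw [Complex.ofReal_div, ← hprod, show -(a : ℂ) - c = -(a + c) by ring]
  simp only [Complex.ofReal_zero, mul_zero, Complex.exp_zero]
  field_simp
  push_cast
  ring

theorem re_fourierInv_ofReal {g : ℝ → ℝ} (hg : Integrable g) (x : ℝ) :
    (𝓕⁻ (fun ξ ↦ (g ξ : ℂ)) x).re = ∫ ξ, g ξ * cos (2 * π * ξ * x) := by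
  have hint : Integrable fun ξ : ℝ ↦
      Complex.exp (↑(2 * π * inner ℝ ξ x) * Complex.I) • (g ξ : ℂ) :=
    hg.ofReal.bdd_mul (c := 1) (by fun_prop)
      (Filter.Eventually.of_forall fun _ ↦ (Complex.norm_exp_ofReal_mul_I _).le)
  rw [fourierInv_eq', ← RCLike.re_to_complex, ← integral_re hint]
  congr 1 with ξ
  rw [smul_eq_mul, RCLike.re_to_complex, Complex.re_mul_ofReal, Complex.exp_ofReal_mul_I_re,
    Real.inner_apply, mul_comm, ← mul_assoc]

theorem integrable_poisson_kernel {β : ℝ} (hβ : 0 < β) :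
    Integrable fun x : ℝ ↦ β / (β ^ 2 + x ^ 2) := by
  refine ((integrable_inv_one_add_sq.comp_div hβ.ne').const_mul β⁻¹).congr
    (Filter.Eventually.of_forall fun x ↦ ?_)
  field_simp

theorem integral_poisson_kernel {β : ℝ} (hβ : 0 < β) :
    ∫ x : ℝ, β / (β ^ 2 + x ^ 2) = π := by
  have h : (fun x : ℝ ↦ β / (β ^ 2 + x ^ 2)) = fun x ↦ β⁻¹ * (1 + (x / β) ^ 2)⁻¹ := by
    ext x
    field_simp
  rw [h, integral_const_mul, Measure.integral_comp_div (fun y ↦ (1 + y ^ 2)⁻¹),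
    integral_univ_inv_one_add_sq, abs_of_pos hβ, smul_eq_mul]
  field_simp

theorem integral_poisson_kernel_mul_cos {β : ℝ} (hβ : 0 < β) (Δ : ℝ) :
    ∫ x : ℝ, β / (β ^ 2 + x ^ 2) * cos (2 * π * Δ * x) =
      π * rexp (-(2 * π * β * |Δ|)) := by
  have ha : 0 < 2 * π * β := by positivity
  set f : ℝ → ℂ := fun x ↦ (rexp (-(2 * π * β * |x|)) : ℂ)
  have hFf : 𝓕 f = fun ξ ↦ ((π⁻¹ * (β / (β ^ 2 + ξ ^ 2)) : ℝ) : ℂ) := by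
    ext ξ
    rw [fourier_exp_neg_mul_abs ha]
    congr 1
    field_simp
  have hg : Integrable fun ξ : ℝ ↦ π⁻¹ * (β / (β ^ 2 + ξ ^ 2)) :=
    (integrable_poisson_kernel hβ).const_mul _
  have hinv : 𝓕⁻ (𝓕 f) Δ = f Δ :=
    (integrable_exp_neg_mul_abs ha).ofReal.fourierInv_fourier_eq (hFf ▸ hg.ofReal)
      (by fun_prop)
  have hre := congrArg Complex.re hinv
  rw [hFf, re_fourierInv_ofReal hg] at hre
  simp only [f, Complex.ofReal_re] at hre
  rw [← hre, ← integral_const_mul]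
  congr 1 with x
  field_simp

theorem integral_poisson_kernel_mul_one_sub_cos {β : ℝ} (hβ : 0 < β) (Δ : ℝ) :
    ∫ x : ℝ, β / (β ^ 2 + x ^ 2) * (1 - cos (2 * π * Δ * x)) =
      π * (1 - rexp (-(2 * π * β * |Δ|))) := by
  have hcos_int : Integrable fun x : ℝ ↦ β / (β ^ 2 + x ^ 2) * cos (2 * π * Δ * x) :=
    (integrable_poisson_kernel hβ).mul_bdd (by fun_prop)
      (Filter.Eventually.of_forall fun x ↦ abs_cos_le_one _)
  simp_rw [mul_one_sub]
  rw [integral_sub (integrable_poisson_kernel hβ) hcos_int, integral_poisson_kernel hβ,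
    integral_poisson_kernel_mul_cos hβ]

theorem sq_exp_half_sub_exp_neg_half (t : ℝ) :
    (rexp (t / 2) - rexp (-(t / 2))) ^ 2 = rexp t + rexp (-t) - 2 := by
  rw [sub_sq, mul_assoc, ← exp_add, add_neg_cancel, exp_zero, ← exp_nat_mul, ← exp_nat_mul]
  ring_nf

theorem integral_majorant_sub_poisson (β Δ : ℝ) (hβ : 0 < β) (hΔ : 0 < Δ) :
    ∫ x : ℝ,
        ((β / (β ^ 2 + x ^ 2)) *
            ((Real.exp (2 * π * β * Δ) + Real.exp (-2 * π * β * Δ) -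
                2 * Real.cos (2 * π * Δ * x)) /
              (Real.exp (π * β * Δ) - Real.exp (-(π * β * Δ))) ^ 2) -
          β / (β ^ 2 + x ^ 2)) =
      2 * π * Real.exp (-2 * π * β * Δ) / (1 - Real.exp (-2 * π * β * Δ)) := by
  have ht : 0 < 2 * π * β * Δ := by positivity
  have hD₀ : rexp (2 * π * β * Δ) + rexp (-(2 * π * β * Δ)) - 2 ≠ 0 := by
    rw [← sq_exp_half_sub_exp_neg_half]
    exact pow_ne_zero _ (sub_ne_zero.2 (exp_injective.ne (by linarith)))
  have hPE : rexp (2 * π * β * Δ) * rexp (-(2 * π * β * Δ)) = 1 := by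
    rw [← exp_add, add_neg_cancel, exp_zero]
  have hE : rexp (-(2 * π * β * Δ)) < 1 := exp_lt_one_iff.2 (neg_neg_of_pos ht)
  have hint := integral_poisson_kernel_mul_one_sub_cos hβ Δ
  rw [abs_of_pos hΔ] at hint
  rw [show π * β * Δ = 2 * π * β * Δ / 2 by ring, sq_exp_half_sub_exp_neg_half,
    show -2 * π * β * Δ = -(2 * π * β * Δ) by ring]
  generalize rexp (2 * π * β * Δ) = P at *
  generalize rexp (-(2 * π * β * Δ)) = E at *
  have hsplit : ∀ x : ℝ,
      β / (β ^ 2 + x ^ 2) * ((P + E - 2 * cos (2 * π * Δ * x)) / (P + E - 2)) -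
        β / (β ^ 2 + x ^ 2) =
      2 / (P + E - 2) * (β / (β ^ 2 + x ^ 2) * (1 - cos (2 * π * Δ * x))) := fun x ↦ by
    field_simp
    ring
  simp_rw [hsplit]
  rw [integral_const_mul, hint]
  field_simp
  rw [eq_div_iff (sub_ne_zero.2 hE.ne')]
  linear_combination -hPE
end
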